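/- arXiv:2102.05367 — 4 statements merged into one kernel-verified Lean document; each statement's English description precedes it below -/
import Mathlib

section
/- Let B ∈ ℂ^{n×n} have n distinct (simple) eigenvalues, let κ* be the maximum of the condition numbers κ(λ) over all eigenvalues λ of B, let 0 < L₀ < L₁, let N_str be the number of eigenvalues λ of B with L₀ < Re λ < L₁, and let δ > 0 satisfy 2 δ n κ* (N_str + 1) < L₁ − L₀. Then there exists L ∈ (L₀, L₁) such that the vertical line {z ∈ ℂ : Re z = L} does not intersect the δ-pseudospectrum Λ_δ(B); that is, every z ∈ ℂ with Re z = L is not an eigenvalue of B and satisfies ‖(zI − B)⁻¹‖₂ < δ⁻¹. -/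
open Matrix

/-- The matrix operator norm induced by the Euclidean norm. -/
noncomputable def matNorm {n : ℕ} (B : Matrix (Fin n) (Fin n) ℂ) : ℝ :=
  ‖(Matrix.toEuclideanCLM (𝕜 := ℂ) B : EuclideanSpace ℂ (Fin n) →L[ℂ] EuclideanSpace ℂ (Fin n))‖

/-- Apply a matrix to a vector of `EuclideanSpace ℂ (Fin n)`. -/
noncomputable def matApply {n : ℕ} (B : Matrix (Fin n) (Fin n) ℂ)
    (x : EuclideanSpace ℂ (Fin n)) : EuclideanSpace ℂ (Fin n) :=
  (Matrix.toEuclideanCLM (𝕜 := ℂ) B : EuclideanSpace ℂ (Fin n) →L[ℂ] EuclideanSpace ℂ (Fin n)) x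

/-!
Distinct eigenvalues make `B` diagonalizable with biorthogonal right and left eigenvectors
`uᵢ, vᵢ`, so `(z - B)⁻¹ = ∑ᵢ Pᵢ / (z - λᵢ)` with `Pᵢ = uᵢ vᵢ* / ⟨vᵢ, uᵢ⟩` and `‖Pᵢ‖ = κ(λᵢ)`.
Hence `‖(z - B)⁻¹‖ < 1/δ` as soon as `z` is farther than `r = δ n κ*` from every eigenvalue,
and a line `Re z = L` with that property exists by a length count: the `r`-neighbourhoods of the
eigenvalues in the strip and the two end pieces of `(L₀, L₁)` cover at most `2r (N_str + 1)` of it.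
-/

open InnerProductSpace MeasureTheory Set
open scoped Finset

lemma exists_mem_Ioo_forall_lt_abs_sub {α : Type*} (s : Finset α) (f : α → ℝ) {a b r : ℝ}
    (hr : 0 ≤ r) (h : 2 * r * (#{i ∈ s | a < f i ∧ f i < b} + 1) < b - a) :
    ∃ L ∈ Ioo a b, ∀ i ∈ s, r < |L - f i| := by
  by_contra! hcover
  set S := {i ∈ s | a < f i ∧ f i < b}
  have hsub : Ioo a b ⊆ Ioc a (a + r) ∪ Ico (b - r) b ∪ ⋃ i ∈ S, Icc (f i - r) (f i + r) := by
    intro L hL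
    obtain ⟨i, hi, hLi⟩ := hcover L hL
    obtain ⟨hLi₁, hLi₂⟩ := abs_le.1 hLi
    by_cases ha : a < f i
    · by_cases hb : f i < b
      · exact Or.inr (mem_biUnion (Finset.mem_filter.2 ⟨hi, ha, hb⟩) ⟨by linarith, by linarith⟩)
      · exact Or.inl (Or.inr ⟨by linarith, hL.2⟩)
    · exact Or.inl (Or.inl ⟨hL.1, by linarith⟩)
  have hfin : volume (Ioc a (a + r) ∪ Ico (b - r) b ∪ ⋃ i ∈ S, Icc (f i - r) (f i + r)) ≠ ⊤ :=
    (measure_union_lt_top (measure_union_lt_top measure_Ioc_lt_top measure_Ico_lt_top)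
      (measure_biUnion_lt_top S.finite_toSet fun _ _ => measure_Icc_lt_top)).ne
  have hpos : 0 ≤ 2 * r * (#S + 1) := by positivity
  have hvol : b - a ≤ 2 * r * (#S + 1) :=
    calc b - a = volume.real (Ioo a b) := by simp [Real.volume_real_Ioo, hpos.trans h.le]
      _ ≤ volume.real (Ioc a (a + r)) + volume.real (Ico (b - r) b)
            + ∑ i ∈ S, volume.real (Icc (f i - r) (f i + r)) :=
        (measureReal_mono hsub hfin).trans <| (measureReal_union_le _ _).trans <|
          add_le_add (measureReal_union_le _ _) (measureReal_biUnion_finset_le _ _)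
      _ = 2 * r * (#S + 1) := by simp [hr]; ring
  linarith

section Resolvent

variable {𝕜 E ι : Type*} [RCLike 𝕜] [NormedAddCommGroup E] [InnerProductSpace 𝕜 E]

noncomputable def spectralProjection (u v : E) : E →L[𝕜] E :=
  (inner 𝕜 v u)⁻¹ • rankOne 𝕜 u v

lemma norm_spectralProjection (u v : E) :
    ‖(spectralProjection u v : E →L[𝕜] E)‖ = ‖u‖ * ‖v‖ / ‖inner 𝕜 v u‖ := by
  rw [spectralProjection, norm_smul, norm_rankOne, norm_inv, inv_mul_eq_div]

lemma inner_eq_zero_of_adjoint_eigenvector [CompleteSpace E] {T : E →L[𝕜] E} {a b : 𝕜}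
    {u v : E} (hu : T u = a • u) (hv : T.adjoint v = starRingEnd 𝕜 b • v) (hab : a ≠ b) :
    inner 𝕜 v u = 0 := by
  have h : a * inner 𝕜 v u = b * inner 𝕜 v u := by
    rw [← inner_smul_right, ← hu, ← ContinuousLinearMap.adjoint_inner_left, hv, inner_smul_left,
      RCLike.conj_conj]
  by_contra hvu
  exact hab (mul_right_cancel₀ hvu h)

variable [Fintype ι] (μ : ι → 𝕜) (u v : ι → E)

noncomputable def spectralResolvent (z : 𝕜) : E →L[𝕜] E :=
  ∑ i, (z - μ i)⁻¹ • spectralProjection (u i) (v i)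

lemma norm_spectralResolvent_le (z : 𝕜) :
    ‖spectralResolvent μ u v z‖ ≤ ∑ i, ‖u i‖ * ‖v i‖ / ‖inner 𝕜 (v i) (u i)‖ / ‖z - μ i‖ := by
  refine (norm_sum_le _ _).trans (Finset.sum_le_sum fun i _ => ?_)
  rw [norm_smul, norm_spectralProjection, norm_inv, inv_mul_eq_div]

variable {μ u v} [FiniteDimensional 𝕜 E] {T : E →L[𝕜] E}

lemma span_eigenvectors_eq_top (hμ : Function.Injective μ) (hu0 : ∀ i, u i ≠ 0)
    (hu : ∀ i, T (u i) = μ i • u i) (hcard : Fintype.card ι = Module.finrank 𝕜 E) :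
    Submodule.span 𝕜 (Set.range u) = ⊤ :=
  (Module.End.eigenvectors_linearIndependent' (T : E →ₗ[𝕜] E) μ hμ u
    fun i => ⟨Module.End.mem_eigenspace_iff.2 (hu i), hu0 i⟩).span_eq_top_of_card_eq_finrank' hcard

variable [CompleteSpace E] (hμ : Function.Injective μ) (hu0 : ∀ i, u i ≠ 0) (hv0 : ∀ i, v i ≠ 0)
  (hu : ∀ i, T (u i) = μ i • u i) (hv : ∀ i, T.adjoint (v i) = starRingEnd 𝕜 (μ i) • v i)
  (hcard : Fintype.card ι = Module.finrank 𝕜 E)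
include hμ hu0 hv0 hu hv hcard

lemma inner_eigenvector_ne_zero (i : ι) : inner 𝕜 (v i) (u i) ≠ 0 := by
  intro h
  have : innerₛₗ 𝕜 (v i) = 0 := by
    refine LinearMap.ext_on_range (span_eigenvectors_eq_top hμ hu0 hu hcard) fun j => ?_
    obtain rfl | hij := eq_or_ne i j
    · exact h
    · exact inner_eq_zero_of_adjoint_eigenvector (hu j) (hv i) (hμ.ne hij.symm)
  exact hv0 i (inner_self_eq_zero.1 (LinearMap.congr_fun this (v i)))

lemma spectralProjection_apply_eigenvector [DecidableEq ι] (i j : ι) :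
    spectralProjection (𝕜 := 𝕜) (u i) (v i) (u j) = if i = j then u j else 0 := by
  split_ifs with hij
  · subst hij
    simp [spectralProjection, inner_eigenvector_ne_zero hμ hu0 hv0 hu hv hcard i]
  · simp [spectralProjection,
      inner_eq_zero_of_adjoint_eigenvector (hu j) (hv i) (hμ.ne (Ne.symm hij))]

lemma spectralResolvent_apply_eigenvector (z : 𝕜) (j : ι) :
    spectralResolvent μ u v z (u j) = (z - μ j)⁻¹ • u j := by
  classical
  simp [spectralResolvent, spectralProjection_apply_eigenvector hμ hu0 hv0 hu hv hcard]

lemma spectralResolvent_comp_sub {z : 𝕜} (hz : ∀ i, z ≠ μ i) :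
    spectralResolvent μ u v z ∘L (z • 1 - T) = 1 := by
  refine ContinuousLinearMap.coe_injective <|
    LinearMap.ext_on_range (span_eigenvectors_eq_top hμ hu0 hu hcard) fun j => ?_
  have hsub : (z • 1 - T) (u j) = (z - μ j) • u j := by simp [hu, sub_smul]
  change spectralResolvent μ u v z ((z • 1 - T) (u j)) = u j
  rw [hsub, map_smul, spectralResolvent_apply_eigenvector hμ hu0 hv0 hu hv hcard, smul_smul,
    mul_inv_cancel₀ (sub_ne_zero.2 (hz j)), one_smul]

end Resolvent

lemma Matrix.isUnit_and_toEuclideanCLM_inv_of_mul_eq_one {𝕜 m : Type*} [RCLike 𝕜] [Fintype m]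
    [DecidableEq m] {A : Matrix m m 𝕜} {M : EuclideanSpace 𝕜 m →L[𝕜] EuclideanSpace 𝕜 m}
    (h : M * toEuclideanCLM (𝕜 := 𝕜) A = 1) :
    IsUnit A ∧ toEuclideanCLM (𝕜 := 𝕜) A⁻¹ = M := by
  have hC : (toEuclideanCLM (𝕜 := 𝕜) (n := m)).symm M * A = 1 := by
    simpa using congrArg (toEuclideanCLM (𝕜 := 𝕜) (n := m)).symm h
  exact ⟨.of_mul_eq_one_right _ hC, by rw [inv_eq_left_inv hC, StarAlgEquiv.apply_symm_apply]⟩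

lemma sum_div_lt_inv {ι : Type*} [Fintype ι] [Nonempty ι] {c d : ι → ℝ} {K δ : ℝ} (hδ : 0 < δ)
    (hc0 : ∀ i, 0 ≤ c i) (hcK : ∀ i, c i ≤ K) (hd : ∀ i, δ * Fintype.card ι * K < d i) :
    ∑ i, c i / d i < δ⁻¹ := by
  have hN : 0 < δ * Fintype.card ι := mul_pos hδ (by exact_mod_cast Fintype.card_pos)
  calc ∑ i, c i / d i < ∑ _i : ι, (δ * Fintype.card ι)⁻¹ :=
        Finset.sum_lt_sum_of_nonempty Finset.univ_nonempty fun i _ => by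
          have hK : 0 ≤ K := (hc0 i).trans (hcK i)
          have hdi : 0 < d i := (hd i).trans_le' (by positivity)
          rw [div_lt_iff₀ hdi, lt_inv_mul_iff₀ hN]
          exact (mul_le_mul_of_nonneg_left (hcK i) hN.le).trans_lt (hd i)
    _ = δ⁻¹ := by simp
theorem exists_line_avoiding_pseudospectrum_general {n : ℕ} (B : Matrix (Fin n) (Fin n) ℂ)
    -- `Λ` is the set of eigenvalues of `B`; `B` has `n` distinct (simple) eigenvalues
    (Λ : Finset ℂ)
    (hsimple : Λ.card = n)
    -- `κ` assigns to each eigenvalue its condition number `‖u‖‖v‖/|⟨v,u⟩|`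
    (κ : ℂ → ℝ)
    (hκ : ∀ μ ∈ Λ, ∃ u v : EuclideanSpace ℂ (Fin n), u ≠ 0 ∧ v ≠ 0 ∧
      matApply B u = μ • u ∧ matApply Bᴴ v = (starRingEnd ℂ μ) • v ∧
      κ μ = ‖u‖ * ‖v‖ / ‖(inner ℂ v u : ℂ)‖)
    -- `κstar` is the maximal eigenvalue condition number
    (κstar : ℝ) (hκstar : IsGreatest (κ '' (Λ : Set ℂ)) κstar)
    (L₀ L₁ : ℝ)
    -- `Nstr` is the number of eigenvalues in the strip `L₀ < Re z < L₁`
    (Nstr : ℕ) (hNstr : Nstr = (Λ.filter (fun z => L₀ < z.re ∧ z.re < L₁)).card)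
    (δ : ℝ) (hδ : 0 < δ)
    (hδsmall : 2 * δ * n * κstar * (Nstr + 1) < L₁ - L₀) :
    ∃ L ∈ Set.Ioo L₀ L₁, ∀ z : ℂ, z.re = L →
      z ∉ spectrum ℂ B ∧
      matNorm ((z • (1 : Matrix (Fin n) (Fin n) ℂ) - B)⁻¹) < δ⁻¹ := by
  choose u v hu0 hv0 hu hv hκuv using fun μ : Λ => hκ μ μ.2
  have hκ_nonneg (μ : Λ) : 0 ≤ κ μ := by rw [hκuv]; positivity
  obtain ⟨μ₀, hμ₀, -⟩ := hκstar.1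
  have hr : 0 ≤ δ * n * κstar :=
    mul_nonneg (by positivity) ((hκ_nonneg ⟨μ₀, hμ₀⟩).trans (hκstar.2 ⟨μ₀, hμ₀, rfl⟩))
  obtain ⟨L, hL, hfar⟩ :=
    exists_mem_Ioo_forall_lt_abs_sub Λ Complex.re hr (by rw [← hNstr]; linarith)
  refine ⟨L, hL, fun z hz => ?_⟩
  have hdist (μ : Λ) : δ * n * κstar < ‖z - μ‖ :=
    (hfar μ μ.2).trans_le (by simpa [hz] using Complex.abs_re_le_norm (z - μ))
  have hne (μ : Λ) : z ≠ μ := fun h => by simpa [h] using hr.trans_lt (hdist μ)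
  have hadj : (toEuclideanCLM (𝕜 := ℂ) B).adjoint = toEuclideanCLM (𝕜 := ℂ) Bᴴ := by
    rw [← ContinuousLinearMap.star_eq_adjoint, ← map_star, star_eq_conjTranspose]
  have hcomp := spectralResolvent_comp_sub (T := toEuclideanCLM (𝕜 := ℂ) B) Subtype.val_injective
    hu0 hv0 hu (fun μ => by rw [hadj]; exact hv μ) (by simp [hsimple]) hne
  obtain ⟨hunit, hinv⟩ := isUnit_and_toEuclideanCLM_inv_of_mul_eq_one (A := z • 1 - B)
    (by rwa [map_sub, map_smul, map_one])
  refine ⟨spectrum.notMem_iff.2 (by rwa [Algebra.algebraMap_eq_smul_one]), ?_⟩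
  have : Nonempty Λ := ⟨⟨μ₀, hμ₀⟩⟩
  calc matNorm (z • 1 - B)⁻¹ ≤ ∑ μ : Λ, κ μ / ‖z - μ‖ := by
        rw [matNorm, hinv]
        simpa only [hκuv] using norm_spectralResolvent_le _ _ _ z
    _ < δ⁻¹ := sum_div_lt_inv hδ hκ_nonneg (fun μ => hκstar.2 ⟨μ, μ.2, rfl⟩)
        (by simpa [hsimple] using hdist)

theorem exists_line_avoiding_pseudospectrum {n : ℕ} (B : Matrix (Fin n) (Fin n) ℂ)
    -- `Λ` is the set of eigenvalues of `B`; `B` has `n` distinct (simple) eigenvalues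
    (Λ : Finset ℂ) (hΛ : ∀ z : ℂ, z ∈ Λ ↔ z ∈ spectrum ℂ B)
    (hsimple : Λ.card = n)
    -- `κ` assigns to each eigenvalue its condition number `‖u‖‖v‖/|⟨v,u⟩|`
    (κ : ℂ → ℝ)
    (hκ : ∀ μ ∈ Λ, ∃ u v : EuclideanSpace ℂ (Fin n), u ≠ 0 ∧ v ≠ 0 ∧
      matApply B u = μ • u ∧ matApply Bᴴ v = (starRingEnd ℂ μ) • v ∧
      κ μ = ‖u‖ * ‖v‖ / ‖(inner ℂ v u : ℂ)‖)
    -- `κstar` is the maximal eigenvalue condition number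
    (κstar : ℝ) (hκstar : IsGreatest (κ '' (Λ : Set ℂ)) κstar)
    (L₀ L₁ : ℝ) (hL₀ : 0 < L₀) (hL₀₁ : L₀ < L₁)
    -- `Nstr` is the number of eigenvalues in the strip `L₀ < Re z < L₁`
    (Nstr : ℕ) (hNstr : Nstr = (Λ.filter (fun z => L₀ < z.re ∧ z.re < L₁)).card)
    (δ : ℝ) (hδ : 0 < δ)
    (hδsmall : 2 * δ * n * κstar * (Nstr + 1) < L₁ - L₀) :
    ∃ L ∈ Set.Ioo L₀ L₁, ∀ z : ℂ, z.re = L →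
      z ∉ spectrum ℂ B ∧
      matNorm ((z • (1 : Matrix (Fin n) (Fin n) ℂ) - B)⁻¹) < δ⁻¹ :=
  exists_line_avoiding_pseudospectrum_general B Λ hsimple κ hκ κstar hκstar L₀ L₁ Nstr hNstr δ hδ
    hδsmall
end

section
/- In the Galerkin setting below, the following two-sided bound holds: cond(M)^{−1/2} · ‖T̃‖ ≤ ‖M⁻¹ A‖₂ ≤ cond(M)^{1/2} · ‖T̃‖. -/
/-- The Galerkin truncation `T̃ := (P ∘ T)|_V : V → V`, where `V = span{φ_1,…,φ_n}` and
`P` is the orthogonal projection onto `V`. -/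
noncomputable def galerkinTrunc {H : Type*} [NormedAddCommGroup H] [InnerProductSpace ℂ H]
    {n : ℕ} (T : H →L[ℂ] H) (φ : Fin n → H) :
    Submodule.span ℂ (Set.range φ) →L[ℂ] Submodule.span ℂ (Set.range φ) :=
  haveI : FiniteDimensional ℂ (Submodule.span ℂ (Set.range φ)) :=
    FiniteDimensional.span_of_finite ℂ (Set.finite_range φ)
  (Submodule.orthogonalProjection (Submodule.span ℂ (Set.range φ))).comp
    (T.comp (Submodule.span ℂ (Set.range φ)).subtypeL)

/-! The synthesis map `S : c ↦ ∑ i, c i • φ i` is an isomorphism `ℂⁿ ≃ V` with `S† S = M`, so the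
C⋆-identity gives `‖S‖² = ‖M‖` and `‖S⁻¹‖² = ‖S⁻¹ S⁻¹†‖ = ‖M⁻¹‖`. Moreover `S† T̃ S = A`, so
`M⁻¹ A = S⁻¹ T̃ S` is similar to `T̃`, and conjugation by `S` changes operator norms by at most
the factor `‖S‖ ‖S⁻¹‖ = √cond(M)`. -/

open Matrix ContinuousLinearMap

namespace ContinuousLinearEquiv

section Conjugation

variable {𝕜 E F : Type*} [NontriviallyNormedField 𝕜] [SeminormedAddCommGroup E]
  [SeminormedAddCommGroup F] [NormedSpace 𝕜 E] [NormedSpace 𝕜 F]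

theorem norm_symm_comp_comp_le (S : E ≃L[𝕜] F) (C : F →L[𝕜] F) :
    ‖(S.symm : F →L[𝕜] E) ∘L C ∘L (S : E →L[𝕜] F)‖ ≤
      ‖(S : E →L[𝕜] F)‖ * ‖(S.symm : F →L[𝕜] E)‖ * ‖C‖ :=
  calc _ ≤ ‖(S.symm : F →L[𝕜] E)‖ * (‖C‖ * ‖(S : E →L[𝕜] F)‖) :=
        (opNorm_comp_le _ _).trans (by gcongr; exact opNorm_comp_le _ _)
    _ = _ := by ring

theorem norm_le_mul_norm_symm_comp_comp (S : E ≃L[𝕜] F) (C : F →L[𝕜] F) :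
    ‖C‖ ≤ ‖(S : E →L[𝕜] F)‖ * ‖(S.symm : F →L[𝕜] E)‖ *
      ‖(S.symm : F →L[𝕜] E) ∘L C ∘L (S : E →L[𝕜] F)‖ := by
  have hC : C = (S : E →L[𝕜] F) ∘L ((S.symm : F →L[𝕜] E) ∘L C ∘L (S : E →L[𝕜] F)) ∘L
      (S.symm : F →L[𝕜] E) := by
    ext x
    simp
  calc ‖C‖ ≤ ‖(S : E →L[𝕜] F)‖ *
        (‖(S.symm : F →L[𝕜] E) ∘L C ∘L (S : E →L[𝕜] F)‖ * ‖(S.symm : F →L[𝕜] E)‖) := by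
        conv_lhs => rw [hC]
        exact (opNorm_comp_le _ _).trans (by gcongr; exact opNorm_comp_le _ _)
    _ = _ := by ring

end Conjugation

section Adjoint

variable {𝕜 E F : Type*} [RCLike 𝕜] [NormedAddCommGroup E] [InnerProductSpace 𝕜 E]
  [CompleteSpace E] [NormedAddCommGroup F] [InnerProductSpace 𝕜 F] [CompleteSpace F]

theorem adjoint_comp_adjoint_symm (S : E ≃L[𝕜] F) :
    adjoint (S : E →L[𝕜] F) ∘L adjoint (S.symm : F →L[𝕜] E) = .id 𝕜 E := by
  rw [← adjoint_comp, coe_symm_comp_coe, adjoint_id]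

theorem adjoint_symm_comp_adjoint (S : E ≃L[𝕜] F) :
    adjoint (S.symm : F →L[𝕜] E) ∘L adjoint (S : E →L[𝕜] F) = .id 𝕜 F := by
  rw [← adjoint_comp, coe_comp_coe_symm, adjoint_id]

end Adjoint

end ContinuousLinearEquiv

section SpanEquiv

variable {𝕜 ι E : Type*} [RCLike 𝕜] [Fintype ι] [NormedAddCommGroup E] [NormedSpace 𝕜 E]

noncomputable def LinearIndependent.euclideanSpaceEquivSpan {v : ι → E}
    (hv : LinearIndependent 𝕜 v) : EuclideanSpace 𝕜 ι ≃L[𝕜] Submodule.span 𝕜 (Set.range v) :=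
  ((EuclideanSpace.basisFun ι 𝕜).toBasis.equiv (Module.Basis.span hv)
    (Equiv.refl ι)).toContinuousLinearEquiv

@[simp]
theorem LinearIndependent.coe_euclideanSpaceEquivSpan_single [DecidableEq ι] {v : ι → E}
    (hv : LinearIndependent 𝕜 v) (i : ι) :
    (hv.euclideanSpaceEquivSpan (EuclideanSpace.single i 1) : E) = v i := by
  rw [← EuclideanSpace.basisFun_apply, ← OrthonormalBasis.coe_toBasis,
    LinearIndependent.euclideanSpaceEquivSpan, LinearEquiv.coe_toContinuousLinearEquiv',
    Module.Basis.equiv_apply, Equiv.refl_apply, Module.Basis.span_apply]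

end SpanEquiv

def galerkinMatrix {𝕜 ι F : Type*} [RCLike 𝕜] [NormedAddCommGroup F] [InnerProductSpace 𝕜 F]
    (C : F →L[𝕜] F) (v : ι → F) : Matrix ι ι 𝕜 :=
  Matrix.of fun i j => inner 𝕜 (v i) (C (v j))

section GalerkinMatrix

variable {𝕜 ι F : Type*} [RCLike 𝕜] [Fintype ι] [DecidableEq ι]
  [NormedAddCommGroup F] [InnerProductSpace 𝕜 F] [CompleteSpace F]

theorem toEuclideanCLM_galerkinMatrix (S : EuclideanSpace 𝕜 ι →L[𝕜] F) (C : F →L[𝕜] F) :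
    toEuclideanCLM (𝕜 := 𝕜) (galerkinMatrix C (S ∘ EuclideanSpace.basisFun ι 𝕜)) =
      adjoint S ∘L C ∘L S := by
  rw [← StarAlgEquiv.eq_symm_apply]
  ext i j
  simp [toEuclideanCLM, LinearMap.toMatrixOrthonormal_apply_apply, galerkinMatrix,
    adjoint_inner_right]

theorem toEuclideanCLM_gram (S : EuclideanSpace 𝕜 ι →L[𝕜] F) :
    toEuclideanCLM (𝕜 := 𝕜) (gram 𝕜 (S ∘ EuclideanSpace.basisFun ι 𝕜)) = adjoint S ∘L S :=
  toEuclideanCLM_galerkinMatrix S (.id 𝕜 F)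

theorem norm_eq_sqrt_norm_toEuclideanCLM_gram (S : EuclideanSpace 𝕜 ι →L[𝕜] F) :
    ‖S‖ = √‖toEuclideanCLM (𝕜 := 𝕜) (gram 𝕜 (S ∘ EuclideanSpace.basisFun ι 𝕜))‖ := by
  rw [toEuclideanCLM_gram, norm_adjoint_comp_self, Real.sqrt_mul_self (norm_nonneg _)]

theorem toEuclideanCLM_gram_inv (S : EuclideanSpace 𝕜 ι ≃L[𝕜] F) :
    toEuclideanCLM (𝕜 := 𝕜) (gram 𝕜 (S ∘ EuclideanSpace.basisFun ι 𝕜))⁻¹ =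
      (S.symm : F →L[𝕜] EuclideanSpace 𝕜 ι) ∘L adjoint (S.symm : F →L[𝕜] EuclideanSpace 𝕜 ι) := by
  rw [inv_eq_right_inv (B := (toEuclideanCLM (𝕜 := 𝕜) (n := ι)).symm _),
    StarAlgEquiv.apply_symm_apply]
  refine EquivLike.injective (toEuclideanCLM (𝕜 := 𝕜) (n := ι)) ?_
  rw [map_mul, StarAlgEquiv.apply_symm_apply, map_one, ← ContinuousLinearEquiv.coe_coe S,
    toEuclideanCLM_gram, mul_def, comp_assoc,
    ← comp_assoc _ (S.symm : F →L[𝕜] EuclideanSpace 𝕜 ι), ContinuousLinearEquiv.coe_comp_coe_symm,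
    id_comp, S.adjoint_comp_adjoint_symm, one_def]

theorem norm_symm_eq_sqrt_norm_toEuclideanCLM_gram_inv (S : EuclideanSpace 𝕜 ι ≃L[𝕜] F) :
    ‖(S.symm : F →L[𝕜] EuclideanSpace 𝕜 ι)‖ =
      √‖toEuclideanCLM (𝕜 := 𝕜) (gram 𝕜 (S ∘ EuclideanSpace.basisFun ι 𝕜))⁻¹‖ := by
  have h := norm_adjoint_comp_self (adjoint (S.symm : F →L[𝕜] EuclideanSpace 𝕜 ι))
  rw [adjoint_adjoint, LinearIsometryEquiv.norm_map] at h
  rw [toEuclideanCLM_gram_inv, h, Real.sqrt_mul_self (norm_nonneg _)]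

theorem toEuclideanCLM_gram_inv_mul_galerkinMatrix (S : EuclideanSpace 𝕜 ι ≃L[𝕜] F)
    (C : F →L[𝕜] F) :
    toEuclideanCLM (𝕜 := 𝕜) ((gram 𝕜 (S ∘ EuclideanSpace.basisFun ι 𝕜))⁻¹ *
        galerkinMatrix C (S ∘ EuclideanSpace.basisFun ι 𝕜)) =
      (S.symm : F →L[𝕜] EuclideanSpace 𝕜 ι) ∘L C ∘L (S : EuclideanSpace 𝕜 ι →L[𝕜] F) := by
  rw [map_mul, toEuclideanCLM_gram_inv, ← ContinuousLinearEquiv.coe_coe S,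
    toEuclideanCLM_galerkinMatrix, mul_def, comp_assoc,
    ← comp_assoc (adjoint (S.symm : F →L[𝕜] EuclideanSpace 𝕜 ι)), S.adjoint_symm_comp_adjoint,
    id_comp]

end GalerkinMatrix

theorem galerkin_matrix_norm_two_sided_bound_general
    {H : Type*} [NormedAddCommGroup H] [InnerProductSpace ℂ H]
    {n : ℕ} (T : H →L[ℂ] H) (φ : Fin n → H) (hφ : LinearIndependent ℂ φ)
    -- the mass (Gram) matrix `M` and the Galerkin matrix `A`
    (M A : Matrix (Fin n) (Fin n) ℂ)
    (hM : ∀ i j, M i j = (inner ℂ (φ i) (φ j) : ℂ))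
    (hA : ∀ i j, A i j = (inner ℂ (φ i) (T (φ j)) : ℂ)) :
    (Real.sqrt (matNorm M * matNorm M⁻¹))⁻¹ * ‖galerkinTrunc T φ‖ ≤ matNorm (M⁻¹ * A) ∧
    matNorm (M⁻¹ * A) ≤ Real.sqrt (matNorm M * matNorm M⁻¹) * ‖galerkinTrunc T φ‖ := by
  set S := hφ.euclideanSpaceEquivSpan
  have : FiniteDimensional ℂ (Submodule.span ℂ (Set.range φ)) :=
    FiniteDimensional.span_of_finite ℂ (Set.finite_range φ)
  have : CompleteSpace (Submodule.span ℂ (Set.range φ)) := FiniteDimensional.complete ℂ _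
  have hM' : M = gram ℂ (S ∘ EuclideanSpace.basisFun (Fin n) ℂ) := by
    ext i j
    simp [gram_apply, hM, S]
  have hA' : A = galerkinMatrix (galerkinTrunc T φ) (S ∘ EuclideanSpace.basisFun (Fin n) ℂ) := by
    ext i j
    simp [galerkinMatrix, galerkinTrunc, hA, S]
  rw [hM', hA']
  simp only [matNorm]
  rw [toEuclideanCLM_gram_inv_mul_galerkinMatrix, Real.sqrt_mul (norm_nonneg _),
    ← norm_symm_eq_sqrt_norm_toEuclideanCLM_gram_inv, ← ContinuousLinearEquiv.coe_coe S,
    ← norm_eq_sqrt_norm_toEuclideanCLM_gram]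
  exact ⟨inv_mul_le_of_le_mul₀ (by positivity) (norm_nonneg _)
    (S.norm_le_mul_norm_symm_comp_comp _), S.norm_symm_comp_comp_le _⟩

theorem galerkin_matrix_norm_two_sided_bound
    {H : Type*} [NormedAddCommGroup H] [InnerProductSpace ℂ H] [CompleteSpace H]
    {n : ℕ} (T : H →L[ℂ] H) (φ : Fin n → H) (hφ : LinearIndependent ℂ φ)
    -- the mass (Gram) matrix `M` and the Galerkin matrix `A`
    (M A : Matrix (Fin n) (Fin n) ℂ)
    (hM : ∀ i j, M i j = (inner ℂ (φ i) (φ j) : ℂ))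
    (hA : ∀ i j, A i j = (inner ℂ (φ i) (T (φ j)) : ℂ)) :
    (Real.sqrt (matNorm M * matNorm M⁻¹))⁻¹ * ‖galerkinTrunc T φ‖ ≤ matNorm (M⁻¹ * A) ∧
    matNorm (M⁻¹ * A) ≤ Real.sqrt (matNorm M * matNorm M⁻¹) * ‖galerkinTrunc T φ‖ :=
  galerkin_matrix_norm_two_sided_bound_general T φ hφ M A hM hA
end

section
/- In the Galerkin setting below, ‖A‖₂ ≤ ‖M‖₂ · ‖T̃‖; if in addition T̃ : V → V is invertible (equivalently, A is invertible), then ‖A⁻¹‖₂ ≤ ‖M⁻¹‖₂ · ‖T̃⁻¹‖, and consequently cond(A) := ‖A‖₂‖A⁻¹‖₂ satisfies cond(A) ≤ cond(M) · ‖T̃‖ · ‖T̃⁻¹‖. -/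
open ContinuousLinearMap Submodule

instance FiniteDimensional.span_range {K V ι : Type*} [DivisionRing K] [AddCommGroup V]
    [Module K V] [Finite ι] (v : ι → V) : FiniteDimensional K (span K (Set.range v)) :=
  .span_of_finite K (Set.finite_range v)

theorem Matrix.toEuclideanCLM_inv_eq {𝕜 ι : Type*} [RCLike 𝕜] [Fintype ι] [DecidableEq ι]
    {B : Matrix ι ι 𝕜} {X : EuclideanSpace 𝕜 ι →L[𝕜] EuclideanSpace 𝕜 ι}
    (h : toEuclideanCLM (𝕜 := 𝕜) B * X = 1) : toEuclideanCLM (𝕜 := 𝕜) B⁻¹ = X := by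
  have hB : B * (toEuclideanCLM (𝕜 := 𝕜)).symm X = 1 :=
    EquivLike.injective (toEuclideanCLM (𝕜 := 𝕜)) (by simpa using h)
  rw [Matrix.inv_eq_right_inv hB, StarAlgEquiv.apply_symm_apply]

section Adjoint

variable {𝕜 E F : Type*} [RCLike 𝕜] [NormedAddCommGroup E] [InnerProductSpace 𝕜 E]
  [CompleteSpace E] [NormedAddCommGroup F] [InnerProductSpace 𝕜 F] [CompleteSpace F]

theorem norm_adjoint_comp_comp_le (K : E →L[𝕜] F) (S : F →L[𝕜] F) :
    ‖adjoint K ∘L S ∘L K‖ ≤ ‖adjoint K ∘L K‖ * ‖S‖ := by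
  have hK : ‖adjoint K‖ = ‖K‖ := LinearIsometryEquiv.norm_map adjoint K
  calc ‖adjoint K ∘L S ∘L K‖ ≤ ‖adjoint K‖ * (‖S‖ * ‖K‖) :=
        (opNorm_comp_le _ _).trans (mul_le_mul_of_nonneg_left (opNorm_comp_le _ _) (norm_nonneg _))
    _ = ‖adjoint K ∘L K‖ * ‖S‖ := by rw [norm_adjoint_comp_self, hK]; ring

theorem adjoint_comp_comp_mul_symm_comp_comp_adjoint (J : E ≃L[𝕜] F) {S S' : F →L[𝕜] F}
    (h : S * S' = 1) :
    (adjoint (J : E →L[𝕜] F) ∘L S ∘L J) *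
      ((J.symm : F →L[𝕜] E) ∘L S' ∘L adjoint (J.symm : F →L[𝕜] E)) = 1 := by
  have hJ : adjoint (J : E →L[𝕜] F) ∘L adjoint (J.symm : F →L[𝕜] E) = 1 := by
    rw [← adjoint_comp, J.coe_symm_comp_coe, adjoint_id, one_def]
  calc _ = adjoint (J : E →L[𝕜] F) ∘L (S * S') ∘L adjoint (J.symm : F →L[𝕜] E) := by
        ext1 x; simp
    _ = 1 := by rw [h, one_def, id_comp, hJ]

end Adjoint

section EuclideanEquivSpan

variable {𝕜 E ι : Type*} [RCLike 𝕜] [NormedAddCommGroup E] [NormedSpace 𝕜 E] [Fintype ι]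
  {v : ι → E}

noncomputable def LinearIndependent.euclideanEquivSpan (hv : LinearIndependent 𝕜 v) :
    EuclideanSpace 𝕜 ι ≃L[𝕜] span 𝕜 (Set.range v) :=
  (EuclideanSpace.equiv ι 𝕜).trans (Module.Basis.span hv).equivFunL.symm

theorem LinearIndependent.coe_euclideanEquivSpan_apply (hv : LinearIndependent 𝕜 v)
    (x : EuclideanSpace 𝕜 ι) :
    (hv.euclideanEquivSpan x : E) = ∑ j, x j • v j := by
  change ((Module.Basis.span hv).equivFun.symm x : E) = _
  simp [Module.Basis.equivFun_symm_apply, Module.Basis.span_apply]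

end EuclideanEquivSpan

section Galerkin

variable {H : Type*} [NormedAddCommGroup H] [InnerProductSpace ℂ H] {n : ℕ} {φ : Fin n → H}

theorem galerkinTrunc_one : galerkinTrunc (1 : H →L[ℂ] H) φ = 1 := by
  ext1 v
  exact orthogonalProjectionOnto_mem_subspace_eq_self v

theorem toEuclideanCLM_eq_adjoint_comp_galerkinTrunc_comp (hφ : LinearIndependent ℂ φ)
    (S : H →L[ℂ] H) (B : Matrix (Fin n) (Fin n) ℂ)
    (hB : ∀ i j, B i j = (inner ℂ (φ i) (S (φ j)) : ℂ)) :
    Matrix.toEuclideanCLM (𝕜 := ℂ) B = adjoint (hφ.euclideanEquivSpan : _ →L[ℂ] _) ∘L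
      galerkinTrunc S φ ∘L (hφ.euclideanEquivSpan : _ →L[ℂ] _) := by
  ext1 x
  ext i
  set J : EuclideanSpace ℂ (Fin n) →L[ℂ] span ℂ (Set.range φ) :=
    hφ.euclideanEquivSpan.toContinuousLinearMap
  have hJi : (J (EuclideanSpace.single i 1) : H) = φ i := by
    simp [J, hφ.coe_euclideanEquivSpan_apply]
  calc _ = ∑ j, B i j * x j := by simp [Matrix.mulVec, dotProduct]
    _ = inner ℂ (φ i) (S (J x)) := by
        simp [J, hφ.coe_euclideanEquivSpan_apply, hB, mul_comm]
    _ = inner ℂ (J (EuclideanSpace.single i 1)) (galerkinTrunc S φ (J x)) := by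
        rw [← hJi]
        exact (inner_orthogonalProjectionOnto_eq_of_mem_left _ _).symm
    _ = inner ℂ (EuclideanSpace.single i 1) ((adjoint J ∘L galerkinTrunc S φ ∘L J) x) :=
        (adjoint_inner_right _ _ _).symm
    _ = _ := by simp [EuclideanSpace.inner_single_left]

end Galerkin

theorem galerkin_matrix_condition_number_bound_general
    {H : Type*} [NormedAddCommGroup H] [InnerProductSpace ℂ H]
    {n : ℕ} (T : H →L[ℂ] H) (φ : Fin n → H) (hφ : LinearIndependent ℂ φ)
    -- the mass (Gram) matrix `M` and the Galerkin matrix `A`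
    (M A : Matrix (Fin n) (Fin n) ℂ)
    (hM : ∀ i j, M i j = (inner ℂ (φ i) (φ j) : ℂ))
    (hA : ∀ i j, A i j = (inner ℂ (φ i) (T (φ j)) : ℂ)) :
    matNorm A ≤ matNorm M * ‖galerkinTrunc T φ‖ ∧
    -- if in addition `T̃` is invertible (with continuous inverse `Tinv`):
    ∀ Tinv : Submodule.span ℂ (Set.range φ) →L[ℂ] Submodule.span ℂ (Set.range φ),
      galerkinTrunc T φ * Tinv = 1 → Tinv * galerkinTrunc T φ = 1 →
      matNorm A⁻¹ ≤ matNorm M⁻¹ * ‖Tinv‖ ∧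
      matNorm A * matNorm A⁻¹ ≤
        (matNorm M * matNorm M⁻¹) * ‖galerkinTrunc T φ‖ * ‖Tinv‖ := by
  have hA' := toEuclideanCLM_eq_adjoint_comp_galerkinTrunc_comp hφ T A hA
  have hM' := toEuclideanCLM_eq_adjoint_comp_galerkinTrunc_comp hφ 1 M (by simpa using hM)
  rw [galerkinTrunc_one] at hM'
  have hA_le : matNorm A ≤ matNorm M * ‖galerkinTrunc T φ‖ := by
    simpa only [matNorm, hA', hM', one_def, id_comp] using
      norm_adjoint_comp_comp_le _ (galerkinTrunc T φ)
  refine ⟨hA_le, fun Tinv hTinv _ => ?_⟩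
  have hAinv := Matrix.toEuclideanCLM_inv_eq (by
    rw [hA']; exact adjoint_comp_comp_mul_symm_comp_comp_adjoint hφ.euclideanEquivSpan hTinv)
  have hMinv := Matrix.toEuclideanCLM_inv_eq (by
    rw [hM']; exact adjoint_comp_comp_mul_symm_comp_comp_adjoint hφ.euclideanEquivSpan (mul_one 1))
  have hAinv_le : matNorm A⁻¹ ≤ matNorm M⁻¹ * ‖Tinv‖ := by
    simpa only [matNorm, hAinv, hMinv, one_def, id_comp, adjoint_adjoint] using
      norm_adjoint_comp_comp_le (adjoint hφ.euclideanEquivSpan.symm.toContinuousLinearMap) Tinv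
  refine ⟨hAinv_le, ?_⟩
  calc matNorm A * matNorm A⁻¹
      ≤ (matNorm M * ‖galerkinTrunc T φ‖) * (matNorm M⁻¹ * ‖Tinv‖) :=
        mul_le_mul hA_le hAinv_le (norm_nonneg _) (mul_nonneg (norm_nonneg _) (opNorm_nonneg _))
    _ = (matNorm M * matNorm M⁻¹) * ‖galerkinTrunc T φ‖ * ‖Tinv‖ := by ring

theorem galerkin_matrix_condition_number_bound
    {H : Type*} [NormedAddCommGroup H] [InnerProductSpace ℂ H] [CompleteSpace H]
    {n : ℕ} (T : H →L[ℂ] H) (φ : Fin n → H) (hφ : LinearIndependent ℂ φ)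
    -- the mass (Gram) matrix `M` and the Galerkin matrix `A`
    (M A : Matrix (Fin n) (Fin n) ℂ)
    (hM : ∀ i j, M i j = (inner ℂ (φ i) (φ j) : ℂ))
    (hA : ∀ i j, A i j = (inner ℂ (φ i) (T (φ j)) : ℂ)) :
    matNorm A ≤ matNorm M * ‖galerkinTrunc T φ‖ ∧
    -- if in addition `T̃` is invertible (with continuous inverse `Tinv`):
    ∀ Tinv : Submodule.span ℂ (Set.range φ) →L[ℂ] Submodule.span ℂ (Set.range φ),
      galerkinTrunc T φ * Tinv = 1 → Tinv * galerkinTrunc T φ = 1 →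
      matNorm A⁻¹ ≤ matNorm M⁻¹ * ‖Tinv‖ ∧
      matNorm A * matNorm A⁻¹ ≤
        (matNorm M * matNorm M⁻¹) * ‖galerkinTrunc T φ‖ * ‖Tinv‖ :=
  galerkin_matrix_condition_number_bound_general T φ hφ M A hM hA
end

section
/- Let a > 0 and let U := { (ω, θ, ω*, θ*) ∈ ℝ⁴ : sinh²(ω) + sin²(θ) ≠ 0 and (ω*, θ*) ≠ (0,0) }. Define on U the functions H(ω, θ, ω*, θ*) := √((ω*)² + (θ*)²) / ( a √(sinh²(ω) + sin²(θ)) ) and L(ω, θ, ω*, θ*) := ( −sin²(θ)(ω*)² + sinh²(ω)(θ*)² ) / ( (ω*)² + (θ*)² ). Then H and L are differentiable on U and their Poisson bracket vanishes identically on U: (∂H/∂ω*)(∂L/∂ω) + (∂H/∂θ*)(∂L/∂θ) − (∂H/∂ω)(∂L/∂ω*) − (∂H/∂θ)(∂L/∂θ*) = 0 at every point of U. In particular, L is conserved along the Hamiltonian flow of H. -/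
/-- Partial derivative of `F : ℝ⁴ → ℝ` in the first variable `ω`. -/
noncomputable def pdOmega (F : ℝ × ℝ × ℝ × ℝ → ℝ) (p : ℝ × ℝ × ℝ × ℝ) : ℝ :=
  deriv (fun w => F (w, p.2.1, p.2.2.1, p.2.2.2)) p.1

/-- Partial derivative of `F : ℝ⁴ → ℝ` in the second variable `θ`. -/
noncomputable def pdTheta (F : ℝ × ℝ × ℝ × ℝ → ℝ) (p : ℝ × ℝ × ℝ × ℝ) : ℝ :=
  deriv (fun w => F (p.1, w, p.2.2.1, p.2.2.2)) p.2.1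

/-- Partial derivative of `F : ℝ⁴ → ℝ` in the third variable `ω*`. -/
noncomputable def pdOmegaStar (F : ℝ × ℝ × ℝ × ℝ → ℝ) (p : ℝ × ℝ × ℝ × ℝ) : ℝ :=
  deriv (fun w => F (p.1, p.2.1, w, p.2.2.2)) p.2.2.1

/-- Partial derivative of `F : ℝ⁴ → ℝ` in the fourth variable `θ*`. -/
noncomputable def pdThetaStar (F : ℝ × ℝ × ℝ × ℝ → ℝ) (p : ℝ × ℝ × ℝ × ℝ) : ℝ :=
  deriv (fun w => F (p.1, p.2.1, p.2.2.1, w)) p.2.2.2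


/-!
Write `S = sinh² ω + sin² θ` and `R = ω*² + θ*²`, so that `H = √R / (a √S)`. Each partial
derivative of `H` is `H` times a logarithmic derivative (`∂H/∂ω = -H ∂_ω S / (2S)`,
`∂H/∂ω* = H ω* / R`, ...), so after factoring out `H` the bracket is a rational expression in
which the terms coming from `ω` and from `θ` cancel pairwise. Conservation of `L` is then the
chain rule: along a Hamiltonian flow `c` of `H`, `d/dt L(c t) = {H, L}(c t)`.
-/

open Real

noncomputable def poissonBracket (F G : ℝ × ℝ × ℝ × ℝ → ℝ) (p : ℝ × ℝ × ℝ × ℝ) : ℝ :=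
  pdOmegaStar F p * pdOmega G p + pdThetaStar F p * pdTheta G p
    - pdOmega F p * pdOmegaStar G p - pdTheta F p * pdThetaStar G p

section FlowDerivative

variable {F : ℝ × ℝ × ℝ × ℝ → ℝ} {p : ℝ × ℝ × ℝ × ℝ}

theorem pdOmega_eq_fderiv (hF : DifferentiableAt ℝ F p) :
    pdOmega F p = fderiv ℝ F p (1, 0, 0, 0) :=
  (hF.hasFDerivAt.comp_hasDerivAt p.1
    ((hasDerivAt_id p.1).prodMk (hasDerivAt_const p.1 p.2))).deriv

theorem pdTheta_eq_fderiv (hF : DifferentiableAt ℝ F p) :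
    pdTheta F p = fderiv ℝ F p (0, 1, 0, 0) :=
  (hF.hasFDerivAt.comp_hasDerivAt p.2.1 ((hasDerivAt_const p.2.1 p.1).prodMk
    ((hasDerivAt_id p.2.1).prodMk (hasDerivAt_const p.2.1 p.2.2)))).deriv

theorem pdOmegaStar_eq_fderiv (hF : DifferentiableAt ℝ F p) :
    pdOmegaStar F p = fderiv ℝ F p (0, 0, 1, 0) :=
  (hF.hasFDerivAt.comp_hasDerivAt p.2.2.1 ((hasDerivAt_const p.2.2.1 p.1).prodMk
    ((hasDerivAt_const p.2.2.1 p.2.1).prodMk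
      ((hasDerivAt_id p.2.2.1).prodMk (hasDerivAt_const p.2.2.1 p.2.2.2))))).deriv

theorem pdThetaStar_eq_fderiv (hF : DifferentiableAt ℝ F p) :
    pdThetaStar F p = fderiv ℝ F p (0, 0, 0, 1) :=
  (hF.hasFDerivAt.comp_hasDerivAt p.2.2.2 ((hasDerivAt_const p.2.2.2 p.1).prodMk
    ((hasDerivAt_const p.2.2.2 p.2.1).prodMk
      ((hasDerivAt_const p.2.2.2 p.2.2.1).prodMk (hasDerivAt_id p.2.2.2))))).deriv

theorem fderiv_apply_eq_sum_pd (hF : DifferentiableAt ℝ F p) (v : ℝ × ℝ × ℝ × ℝ) :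
    fderiv ℝ F p v = v.1 * pdOmega F p + v.2.1 * pdTheta F p
      + v.2.2.1 * pdOmegaStar F p + v.2.2.2 * pdThetaStar F p := by
  obtain ⟨v₁, v₂, v₃, v₄⟩ := v
  have hv : ((v₁, v₂, v₃, v₄) : ℝ × ℝ × ℝ × ℝ) = v₁ • ((1, 0, 0, 0) : ℝ × ℝ × ℝ × ℝ)
      + v₂ • (0, 1, 0, 0) + v₃ • (0, 0, 1, 0) + v₄ • (0, 0, 0, 1) := by
    simp
  conv_lhs => rw [hv]
  rw [pdOmega_eq_fderiv hF, pdTheta_eq_fderiv hF, pdOmegaStar_eq_fderiv hF,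
    pdThetaStar_eq_fderiv hF]
  simp only [map_add, map_smul, smul_eq_mul]

theorem DifferentiableAt.hasDerivAt_comp_hamiltonian_flow {H G : ℝ × ℝ × ℝ × ℝ → ℝ}
    {c : ℝ → ℝ × ℝ × ℝ × ℝ} {t : ℝ} (hG : DifferentiableAt ℝ G (c t))
    (hω : HasDerivAt (fun s => (c s).1) (pdOmegaStar H (c t)) t)
    (hθ : HasDerivAt (fun s => (c s).2.1) (pdThetaStar H (c t)) t)
    (hω' : HasDerivAt (fun s => (c s).2.2.1) (-pdOmega H (c t)) t)
    (hθ' : HasDerivAt (fun s => (c s).2.2.2) (-pdTheta H (c t)) t) :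
    HasDerivAt (fun s => G (c s)) (poissonBracket H G (c t)) t := by
  have h := hG.hasFDerivAt.comp_hasDerivAt t (hω.prodMk (hθ.prodMk (hω'.prodMk hθ')))
  rw [fderiv_apply_eq_sum_pd hG] at h
  refine h.congr_deriv ?_
  dsimp only [poissonBracket]
  ring

end FlowDerivative

section SliceDerivatives

variable {f : ℝ → ℝ} {f' z : ℝ}

theorem HasDerivAt.const_div_mul_sqrt (c a : ℝ) (hf : HasDerivAt f f' z) (hz : 0 < f z) :
    HasDerivAt (fun w => c / (a * √(f w))) (-(c / (a * √(f z))) * f' / (2 * f z)) z := by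
  have hsqrt : √(f z) ≠ 0 := (sqrt_pos.mpr hz).ne'
  have h := ((hf.sqrt hz.ne').inv hsqrt).const_mul (c / a)
  have e : (fun w => c / (a * √(f w))) = fun w => c / a * (√(f w))⁻¹ := by
    funext w
    ring
  rw [e]
  refine h.congr_deriv ?_
  field_simp
  rw [sq_sqrt hz.le]

theorem HasDerivAt.sqrt_div_const (d : ℝ) (hf : HasDerivAt f f' z) (hz : 0 < f z) :
    HasDerivAt (fun w => √(f w) / d) (√(f z) / d * f' / (2 * f z)) z := by
  have hsqrt : √(f z) ≠ 0 := (sqrt_pos.mpr hz).ne'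
  refine ((hf.sqrt hz.ne').div_const d).congr_deriv ?_
  field_simp
  rw [sq_sqrt hz.le]

end SliceDerivatives

noncomputable def hamiltonian (a : ℝ) (p : ℝ × ℝ × ℝ × ℝ) : ℝ :=
  √(p.2.2.1 ^ 2 + p.2.2.2 ^ 2) / (a * √(sinh p.1 ^ 2 + sin p.2.1 ^ 2))

noncomputable def firstIntegral (p : ℝ × ℝ × ℝ × ℝ) : ℝ :=
  (-(sin p.2.1 ^ 2) * p.2.2.1 ^ 2 + sinh p.1 ^ 2 * p.2.2.2 ^ 2) / (p.2.2.1 ^ 2 + p.2.2.2 ^ 2)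

section PartialDerivatives

variable (a : ℝ) {o t x y : ℝ}

theorem pdOmega_hamiltonian (hS : 0 < sinh o ^ 2 + sin t ^ 2) :
    pdOmega (hamiltonian a) (o, t, x, y) =
      -hamiltonian a (o, t, x, y) * (2 * sinh o * cosh o) / (2 * (sinh o ^ 2 + sin t ^ 2)) := by
  have hderiv : HasDerivAt (fun w => sinh w ^ 2 + sin t ^ 2) (2 * sinh o * cosh o) o := by
    simpa using ((hasDerivAt_sinh o).fun_pow 2).add_const (sin t ^ 2)
  exact (hderiv.const_div_mul_sqrt √(x ^ 2 + y ^ 2) a hS).deriv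

theorem pdTheta_hamiltonian (hS : 0 < sinh o ^ 2 + sin t ^ 2) :
    pdTheta (hamiltonian a) (o, t, x, y) =
      -hamiltonian a (o, t, x, y) * (2 * sin t * cos t) / (2 * (sinh o ^ 2 + sin t ^ 2)) := by
  have hderiv : HasDerivAt (fun w => sinh o ^ 2 + sin w ^ 2) (2 * sin t * cos t) t := by
    simpa using ((hasDerivAt_sin t).fun_pow 2).const_add (sinh o ^ 2)
  exact (hderiv.const_div_mul_sqrt √(x ^ 2 + y ^ 2) a hS).deriv

theorem pdOmegaStar_hamiltonian (hR : 0 < x ^ 2 + y ^ 2) :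
    pdOmegaStar (hamiltonian a) (o, t, x, y) =
      hamiltonian a (o, t, x, y) * (2 * x) / (2 * (x ^ 2 + y ^ 2)) := by
  have hderiv : HasDerivAt (fun w => w ^ 2 + y ^ 2) (2 * x) x := by
    simpa using (hasDerivAt_pow 2 x).add_const (y ^ 2)
  exact (hderiv.sqrt_div_const (a * √(sinh o ^ 2 + sin t ^ 2)) hR).deriv

theorem pdThetaStar_hamiltonian (hR : 0 < x ^ 2 + y ^ 2) :
    pdThetaStar (hamiltonian a) (o, t, x, y) =
      hamiltonian a (o, t, x, y) * (2 * y) / (2 * (x ^ 2 + y ^ 2)) := by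
  have hderiv : HasDerivAt (fun w => x ^ 2 + w ^ 2) (2 * y) y := by
    simpa using (hasDerivAt_pow 2 y).const_add (x ^ 2)
  exact (hderiv.sqrt_div_const (a * √(sinh o ^ 2 + sin t ^ 2)) hR).deriv

theorem pdOmega_firstIntegral :
    pdOmega firstIntegral (o, t, x, y) = 2 * sinh o * cosh o * y ^ 2 / (x ^ 2 + y ^ 2) := by
  have h := ((((hasDerivAt_sinh o).fun_pow 2).mul_const (y ^ 2)).const_add
    (-(sin t ^ 2) * x ^ 2)).div_const (x ^ 2 + y ^ 2)
  refine (h.congr_deriv ?_).deriv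
  ring

theorem pdTheta_firstIntegral :
    pdTheta firstIntegral (o, t, x, y) = -(2 * sin t * cos t * x ^ 2) / (x ^ 2 + y ^ 2) := by
  have h := (((((hasDerivAt_sin t).fun_pow 2).neg).mul_const (x ^ 2)).add_const
    (sinh o ^ 2 * y ^ 2)).div_const (x ^ 2 + y ^ 2)
  refine (h.congr_deriv ?_).deriv
  ring

theorem pdOmegaStar_firstIntegral (hR : 0 < x ^ 2 + y ^ 2) :
    pdOmegaStar firstIntegral (o, t, x, y) =
      -(2 * x * y ^ 2 * (sinh o ^ 2 + sin t ^ 2)) / (x ^ 2 + y ^ 2) ^ 2 := by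
  have h := ((((hasDerivAt_pow 2 x).const_mul (-(sin t ^ 2))).add_const (sinh o ^ 2 * y ^ 2)).div
    ((hasDerivAt_pow 2 x).add_const (y ^ 2)) hR.ne')
  refine (h.congr_deriv ?_).deriv
  ring

theorem pdThetaStar_firstIntegral (hR : 0 < x ^ 2 + y ^ 2) :
    pdThetaStar firstIntegral (o, t, x, y) =
      2 * y * x ^ 2 * (sinh o ^ 2 + sin t ^ 2) / (x ^ 2 + y ^ 2) ^ 2 := by
  have h := ((((hasDerivAt_pow 2 y).const_mul (sinh o ^ 2)).const_add (-(sin t ^ 2) * x ^ 2)).div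
    ((hasDerivAt_pow 2 y).const_add (x ^ 2)) hR.ne')
  refine (h.congr_deriv ?_).deriv
  ring

end PartialDerivatives

theorem differentiableAt_hamiltonian (a : ℝ) {p : ℝ × ℝ × ℝ × ℝ}
    (hS : 0 < sinh p.1 ^ 2 + sin p.2.1 ^ 2) (hR : 0 < p.2.2.1 ^ 2 + p.2.2.2 ^ 2) :
    DifferentiableAt ℝ (hamiltonian a) p := by
  have e : hamiltonian a = fun p =>
      √(p.2.2.1 ^ 2 + p.2.2.2 ^ 2) / √(sinh p.1 ^ 2 + sin p.2.1 ^ 2) / a := by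
    funext p
    rw [hamiltonian, div_div, mul_comm]
  have := hR.ne'
  have := hS.ne'
  have := (sqrt_pos.mpr hS).ne'
  rw [e]
  fun_prop (disch := assumption)

theorem differentiableAt_firstIntegral {p : ℝ × ℝ × ℝ × ℝ}
    (hR : 0 < p.2.2.1 ^ 2 + p.2.2.2 ^ 2) :
    DifferentiableAt ℝ firstIntegral p := by
  have := hR.ne'
  unfold firstIntegral
  fun_prop (disch := assumption)

theorem sq_add_sq_pos_of_ne_zero {x y : ℝ} (h : (x, y) ≠ (0, 0)) : 0 < x ^ 2 + y ^ 2 := by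
  by_contra! h'
  have hx : x ^ 2 = 0 := by linarith [sq_nonneg x, sq_nonneg y]
  have hy : y ^ 2 = 0 := by linarith [sq_nonneg x, sq_nonneg y]
  exact h (by simp_all)

theorem poissonBracket_hamiltonian_firstIntegral (a : ℝ) {o t x y : ℝ}
    (hS : 0 < sinh o ^ 2 + sin t ^ 2) (hR : 0 < x ^ 2 + y ^ 2) :
    poissonBracket (hamiltonian a) firstIntegral (o, t, x, y) = 0 := by
  rw [poissonBracket, pdOmega_hamiltonian a hS, pdTheta_hamiltonian a hS,
    pdOmegaStar_hamiltonian a hR, pdThetaStar_hamiltonian a hR, pdOmega_firstIntegral,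
    pdTheta_firstIntegral, pdOmegaStar_firstIntegral hR, pdThetaStar_firstIntegral hR]
  field_simp
  ring

theorem poisson_bracket_vanishes_general (a : ℝ)
    (U : Set (ℝ × ℝ × ℝ × ℝ))
    (hU : U = {p : ℝ × ℝ × ℝ × ℝ |
      Real.sinh p.1 ^ 2 + Real.sin p.2.1 ^ 2 ≠ 0 ∧ (p.2.2.1, p.2.2.2) ≠ (0, 0)})
    (Hf Lf : ℝ × ℝ × ℝ × ℝ → ℝ)
    (hHf : ∀ p : ℝ × ℝ × ℝ × ℝ, Hf p =
      Real.sqrt (p.2.2.1 ^ 2 + p.2.2.2 ^ 2) /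
        (a * Real.sqrt (Real.sinh p.1 ^ 2 + Real.sin p.2.1 ^ 2)))
    (hLf : ∀ p : ℝ × ℝ × ℝ × ℝ, Lf p =
      (-(Real.sin p.2.1 ^ 2) * p.2.2.1 ^ 2 + Real.sinh p.1 ^ 2 * p.2.2.2 ^ 2) /
        (p.2.2.1 ^ 2 + p.2.2.2 ^ 2)) :
    DifferentiableOn ℝ Hf U ∧ DifferentiableOn ℝ Lf U ∧
    (∀ p ∈ U,
      pdOmegaStar Hf p * pdOmega Lf p + pdThetaStar Hf p * pdTheta Lf p
        - pdOmega Hf p * pdOmegaStar Lf p - pdTheta Hf p * pdThetaStar Lf p = 0) ∧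
    -- in particular, `L` is conserved along the Hamiltonian flow of `H`
    (∀ c : ℝ → ℝ × ℝ × ℝ × ℝ, (∀ t : ℝ, c t ∈ U) →
      (∀ t : ℝ, HasDerivAt (fun s => (c s).1) (pdOmegaStar Hf (c t)) t) →
      (∀ t : ℝ, HasDerivAt (fun s => (c s).2.1) (pdThetaStar Hf (c t)) t) →
      (∀ t : ℝ, HasDerivAt (fun s => (c s).2.2.1) (-pdOmega Hf (c t)) t) →
      (∀ t : ℝ, HasDerivAt (fun s => (c s).2.2.2) (-pdTheta Hf (c t)) t) →
      ∀ t : ℝ, HasDerivAt (fun s => Lf (c s)) 0 t) := by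
  obtain rfl : Hf = hamiltonian a := funext hHf
  obtain rfl : Lf = firstIntegral := funext hLf
  have hpos : ∀ p ∈ U, 0 < sinh p.1 ^ 2 + sin p.2.1 ^ 2 ∧ 0 < p.2.2.1 ^ 2 + p.2.2.2 ^ 2 := by
    rintro p hp
    rw [hU] at hp
    exact ⟨(by positivity : (0 : ℝ) ≤ _).lt_of_ne' hp.1, sq_add_sq_pos_of_ne_zero hp.2⟩
  have hbracket : ∀ p ∈ U, poissonBracket (hamiltonian a) firstIntegral p = 0 := by
    rintro ⟨o, t, x, y⟩ hp
    exact poissonBracket_hamiltonian_firstIntegral a (hpos _ hp).1 (hpos _ hp).2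
  refine ⟨fun p hp =>
      (differentiableAt_hamiltonian a (hpos p hp).1 (hpos p hp).2).differentiableWithinAt,
    fun p hp => (differentiableAt_firstIntegral (hpos p hp).2).differentiableWithinAt, hbracket,
    fun c hc hω hθ hω' hθ' t => ?_⟩
  rw [← hbracket (c t) (hc t)]
  exact (differentiableAt_firstIntegral (hpos _ (hc t)).2).hasDerivAt_comp_hamiltonian_flow
    (hω t) (hθ t) (hω' t) (hθ' t)

theorem poisson_bracket_vanishes (a : ℝ) (ha : 0 < a)
    (U : Set (ℝ × ℝ × ℝ × ℝ))
    (hU : U = {p : ℝ × ℝ × ℝ × ℝ |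
      Real.sinh p.1 ^ 2 + Real.sin p.2.1 ^ 2 ≠ 0 ∧ (p.2.2.1, p.2.2.2) ≠ (0, 0)})
    (Hf Lf : ℝ × ℝ × ℝ × ℝ → ℝ)
    (hHf : ∀ p : ℝ × ℝ × ℝ × ℝ, Hf p =
      Real.sqrt (p.2.2.1 ^ 2 + p.2.2.2 ^ 2) /
        (a * Real.sqrt (Real.sinh p.1 ^ 2 + Real.sin p.2.1 ^ 2)))
    (hLf : ∀ p : ℝ × ℝ × ℝ × ℝ, Lf p =
      (-(Real.sin p.2.1 ^ 2) * p.2.2.1 ^ 2 + Real.sinh p.1 ^ 2 * p.2.2.2 ^ 2) /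
        (p.2.2.1 ^ 2 + p.2.2.2 ^ 2)) :
    DifferentiableOn ℝ Hf U ∧ DifferentiableOn ℝ Lf U ∧
    (∀ p ∈ U,
      pdOmegaStar Hf p * pdOmega Lf p + pdThetaStar Hf p * pdTheta Lf p
        - pdOmega Hf p * pdOmegaStar Lf p - pdTheta Hf p * pdThetaStar Lf p = 0) ∧
    -- in particular, `L` is conserved along the Hamiltonian flow of `H`
    (∀ c : ℝ → ℝ × ℝ × ℝ × ℝ, (∀ t : ℝ, c t ∈ U) →
      (∀ t : ℝ, HasDerivAt (fun s => (c s).1) (pdOmegaStar Hf (c t)) t) →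
      (∀ t : ℝ, HasDerivAt (fun s => (c s).2.1) (pdThetaStar Hf (c t)) t) →
      (∀ t : ℝ, HasDerivAt (fun s => (c s).2.2.1) (-pdOmega Hf (c t)) t) →
      (∀ t : ℝ, HasDerivAt (fun s => (c s).2.2.2) (-pdTheta Hf (c t)) t) →
      ∀ t : ℝ, HasDerivAt (fun s => Lf (c s)) 0 t) :=
  poisson_bracket_vanishes_general a U hU Hf Lf hHf hLf
end
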